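/- arXiv:math/0610736 — 3 statements merged into one kernel-verified Lean document; each statement's English description precedes it below -/
import Mathlib

section
/- Let μ = (μ₁,…,μ_m) and λ = (λ₁,…,λ_n) be probability vectors, ω₁ and ω₂ two weight functions with respect to μ and λ, x₁,…,xₙ nonnegative real numbers, and p ≥ 1. Then ∑_{j=1}^n λⱼ^p xⱼ^p ≤ ∑_{i=1}^m ∑_{j=1}^n μᵢ L_p^p(ω₁(i,j)λⱼxⱼ, ω₂(i,j)λⱼxⱼ) ≤ ∑_{j=1}^n λⱼxⱼ^p. -/
/-!
By the Hermite–Hadamard inequality for the convex function `t ↦ t ^ p`, the mean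
`L_p^p(a, b) = (∫ t in a..b, t ^ p) / (b - a)` lies between `((a + b) / 2) ^ p` and
`(a ^ p + b ^ p) / 2`.

Fix a column `j`. The column conditions give `∑ᵢ μᵢ (ω₁(i,j) + ω₂(i,j)) / 2 = 1`, so `λⱼxⱼ` is the
`μ`-average of the midpoints of `ω₁(i,j)λⱼxⱼ` and `ω₂(i,j)λⱼxⱼ`, and Jensen's inequality followed
by the lower Hermite–Hadamard bound gives the left inequality. The row conditions give
`ωₖ(i,j)λⱼ ≤ 1`, hence `(ωₖ(i,j)λⱼxⱼ) ^ p ≤ ωₖ(i,j)λⱼ xⱼ ^ p`; with the upper Hermite–Hadamard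
bound and the column conditions this sums to `λⱼ xⱼ ^ p`.
-/

open Finset

/-- The `p`-th power of the `p`-logarithmic mean:
`L_p^p(a,b) = (b^{p+1} - a^{p+1})/((p+1)(b-a))` for `a ≠ b`, and `a^p` for `a = b`. -/
noncomputable def LpPowP (p a b : ℝ) : ℝ :=
  if a = b then a ^ p else (b ^ (p + 1) - a ^ (p + 1)) / ((p + 1) * (b - a))

open MeasureTheory intervalIntegral

section HermiteHadamard

variable {f : ℝ → ℝ} {s : Set ℝ} {a b : ℝ}

lemma ConvexOn.two_mul_map_midpoint_le (hf : ConvexOn ℝ s f) {x y : ℝ} (hx : x ∈ s)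
    (hy : y ∈ s) : 2 * f ((x + y) / 2) ≤ f x + f y := by
  have h := hf.2 hx hy (by norm_num : (0 : ℝ) ≤ 1 / 2) (by norm_num : (0 : ℝ) ≤ 1 / 2)
    (by norm_num)
  simp only [smul_eq_mul] at h
  rw [show 1 / 2 * x + 1 / 2 * y = (x + y) / 2 by ring] at h
  linarith

/-- Writing `t = θ a + (1 - θ) b`, the reflected point is `a + b - t = (1 - θ) a + θ b`. -/
lemma ConvexOn.map_add_map_reflect_le (hf : ConvexOn ℝ (Set.Icc a b) f) {t : ℝ}
    (ht : t ∈ Set.Icc a b) : f t + f (a + b - t) ≤ f a + f b := by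
  obtain ⟨hat, htb⟩ := ht
  rcases (hat.trans htb).eq_or_lt with rfl | hab
  · obtain rfl : t = a := le_antisymm htb hat
    simp
  have hba : 0 < b - a := sub_pos.2 hab
  have ha : a ∈ Set.Icc a b := Set.left_mem_Icc.2 hab.le
  have hb : b ∈ Set.Icc a b := Set.right_mem_Icc.2 hab.le
  have hθ : 0 ≤ (b - t) / (b - a) := div_nonneg (by linarith) hba.le
  have hθ' : 0 ≤ (t - a) / (b - a) := div_nonneg (by linarith) hba.le
  have hsum : (b - t) / (b - a) + (t - a) / (b - a) = 1 := by field_simp; ring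
  have h₁ := hf.2 ha hb hθ hθ' hsum
  have h₂ := hf.2 ha hb hθ' hθ (by rw [add_comm, hsum])
  simp only [smul_eq_mul] at h₁ h₂
  rw [show (b - t) / (b - a) * a + (t - a) / (b - a) * b = t by field_simp; ring] at h₁
  rw [show (t - a) / (b - a) * a + (b - t) / (b - a) * b = a + b - t by field_simp; ring] at h₂
  linear_combination h₁ + h₂ + (f a + f b) * hsum

lemma IntervalIntegrable.comp_reflect (hf : IntervalIntegrable f volume a b) :
    IntervalIntegrable (fun t => f (a + b - t)) volume a b := by
  simpa using (hf.comp_sub_left (a + b)).symm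

lemma integral_add_comp_reflect (hf : IntervalIntegrable f volume a b) :
    ∫ t in a..b, (f t + f (a + b - t)) = 2 * ∫ t in a..b, f t := by
  rw [integral_add hf hf.comp_reflect, integral_comp_sub_left]
  simp only [add_sub_cancel_left, add_sub_cancel_right]
  ring

lemma ConvexOn.mul_map_midpoint_le_integral (hf : ConvexOn ℝ (Set.Icc a b) f)
    (hfi : IntervalIntegrable f volume a b) (hab : a ≤ b) :
    (b - a) * f ((a + b) / 2) ≤ ∫ t in a..b, f t := by
  have hpair : ∀ t ∈ Set.Icc a b, 2 * f ((a + b) / 2) ≤ f t + f (a + b - t) := by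
    intro t ht
    have hrefl : a + b - t ∈ Set.Icc a b := ⟨by linarith [ht.2], by linarith [ht.1]⟩
    simpa using hf.two_mul_map_midpoint_le ht hrefl
  have h := integral_mono_on hab intervalIntegrable_const (hfi.add hfi.comp_reflect) hpair
  rw [intervalIntegral.integral_const, integral_add_comp_reflect hfi, smul_eq_mul] at h
  linarith

lemma ConvexOn.integral_le_mul_avg (hf : ConvexOn ℝ (Set.Icc a b) f)
    (hfi : IntervalIntegrable f volume a b) (hab : a ≤ b) :
    ∫ t in a..b, f t ≤ (b - a) * ((f a + f b) / 2) := by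
  have h := integral_mono_on hab (hfi.add hfi.comp_reflect) intervalIntegrable_const
    fun t ht => hf.map_add_map_reflect_le ht
  rw [intervalIntegral.integral_const, integral_add_comp_reflect hfi, smul_eq_mul] at h
  linarith

end HermiteHadamard

section LogarithmicMean

variable {p a b : ℝ}

lemma lpPowP_comm (p a b : ℝ) : LpPowP p a b = LpPowP p b a := by
  unfold LpPowP
  rcases eq_or_ne a b with rfl | h
  · rfl
  · rw [if_neg h, if_neg h.symm, ← neg_div_neg_eq]
    ring_nf

lemma lpPowP_eq_integral_div (hp : -1 < p) (hab : a ≠ b) :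
    LpPowP p a b = (∫ t in a..b, t ^ p) / (b - a) := by
  rw [LpPowP, if_neg hab, integral_rpow (Or.inl hp), div_div]

lemma convexOn_rpow_Icc (hp : 1 ≤ p) (ha : 0 ≤ a) :
    ConvexOn ℝ (Set.Icc a b) fun t : ℝ => t ^ p :=
  (convexOn_rpow hp).subset (fun _ ht => le_trans ha ht.1) (convex_Icc a b)

lemma rpow_midpoint_le_lpPowP (hp : 1 ≤ p) (ha : 0 ≤ a) (hb : 0 ≤ b) :
    ((a + b) / 2) ^ p ≤ LpPowP p a b := by
  wlog hab : a ≤ b generalizing a b with H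
  · rw [lpPowP_comm, add_comm]
    exact H hb ha (le_of_not_ge hab)
  rcases hab.eq_or_lt with rfl | hab
  · rw [LpPowP, if_pos rfl, add_self_div_two]
  rw [lpPowP_eq_integral_div (by linarith) hab.ne, le_div_iff₀ (sub_pos.2 hab), mul_comm]
  exact (convexOn_rpow_Icc hp ha).mul_map_midpoint_le_integral
    (intervalIntegrable_rpow' (by linarith)) hab.le

lemma lpPowP_le_avg_rpow (hp : 1 ≤ p) (ha : 0 ≤ a) (hb : 0 ≤ b) :
    LpPowP p a b ≤ (a ^ p + b ^ p) / 2 := by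
  wlog hab : a ≤ b generalizing a b with H
  · rw [lpPowP_comm, add_comm]
    exact H hb ha (le_of_not_ge hab)
  rcases hab.eq_or_lt with rfl | hab
  · rw [LpPowP, if_pos rfl, add_self_div_two]
  rw [lpPowP_eq_integral_div (by linarith) hab.ne, div_le_iff₀ (sub_pos.2 hab), mul_comm]
  exact (convexOn_rpow_Icc hp ha).integral_le_mul_avg
    (intervalIntegrable_rpow' (by linarith)) hab.le

end LogarithmicMean

section WeightedSums

variable {ι : Type*} [Fintype ι] {μ ω₁ ω₂ : ι → ℝ}

lemma sum_mul_avg_mul_eq (hω₁μ : ∑ i, ω₁ i * μ i = 1) (hω₂μ : ∑ i, ω₂ i * μ i = 1) (c : ℝ) :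
    ∑ i, μ i * ((ω₁ i * c + ω₂ i * c) / 2) = c := by
  have h (i : ι) : μ i * ((ω₁ i * c + ω₂ i * c) / 2) = (ω₁ i * μ i + ω₂ i * μ i) * (c / 2) := by
    ring
  rw [Finset.sum_congr rfl fun i _ => h i, ← Finset.sum_mul, Finset.sum_add_distrib, hω₁μ, hω₂μ]
  ring

lemma rpow_le_sum_mul_lpPowP {p c : ℝ} (hp : 1 ≤ p) (hμ0 : ∀ i, 0 ≤ μ i) (hμ1 : ∑ i, μ i = 1)
    (hω₁0 : ∀ i, 0 ≤ ω₁ i) (hω₂0 : ∀ i, 0 ≤ ω₂ i)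
    (hω₁μ : ∑ i, ω₁ i * μ i = 1) (hω₂μ : ∑ i, ω₂ i * μ i = 1) (hc : 0 ≤ c) :
    c ^ p ≤ ∑ i, μ i * LpPowP p (ω₁ i * c) (ω₂ i * c) := by
  have hmid (i : ι) : 0 ≤ (ω₁ i * c + ω₂ i * c) / 2 := by
    have := hω₁0 i; have := hω₂0 i; positivity
  calc c ^ p = (∑ i, μ i * ((ω₁ i * c + ω₂ i * c) / 2)) ^ p := by
        rw [sum_mul_avg_mul_eq hω₁μ hω₂μ]
    _ ≤ ∑ i, μ i * ((ω₁ i * c + ω₂ i * c) / 2) ^ p :=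
        Real.rpow_arith_mean_le_arith_mean_rpow _ _ _ (fun i _ => hμ0 i) hμ1
          (fun i _ => hmid i) hp
    _ ≤ ∑ i, μ i * LpPowP p (ω₁ i * c) (ω₂ i * c) := by
        gcongr with i
        · exact hμ0 i
        · exact rpow_midpoint_le_lpPowP hp (mul_nonneg (hω₁0 i) hc) (mul_nonneg (hω₂0 i) hc)

lemma rpow_mul_le_mul_rpow {p s y : ℝ} (hp : 1 ≤ p) (hs0 : 0 ≤ s) (hs1 : s ≤ 1) (hy : 0 ≤ y) :
    (s * y) ^ p ≤ s * y ^ p := by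
  rw [Real.mul_rpow hs0 hy]
  gcongr
  exact Real.rpow_le_self_of_le_one hs0 hs1 hp

lemma sum_mul_lpPowP_le {p l x : ℝ} (hp : 1 ≤ p) (hμ0 : ∀ i, 0 ≤ μ i)
    (hω₁0 : ∀ i, 0 ≤ ω₁ i) (hω₂0 : ∀ i, 0 ≤ ω₂ i)
    (hω₁μ : ∑ i, ω₁ i * μ i = 1) (hω₂μ : ∑ i, ω₂ i * μ i = 1)
    (hω₁l : ∀ i, ω₁ i * l ≤ 1) (hω₂l : ∀ i, ω₂ i * l ≤ 1) (hl : 0 ≤ l) (hx : 0 ≤ x) :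
    ∑ i, μ i * LpPowP p (ω₁ i * l * x) (ω₂ i * l * x) ≤ l * x ^ p := by
  have hterm {ω : ι → ℝ} (hω0 : ∀ i, 0 ≤ ω i) (hωl : ∀ i, ω i * l ≤ 1) (i : ι) :
      (ω i * l * x) ^ p ≤ ω i * (l * x ^ p) := by
    rw [← mul_assoc]
    exact rpow_mul_le_mul_rpow hp (mul_nonneg (hω0 i) hl) (hωl i) hx
  calc ∑ i, μ i * LpPowP p (ω₁ i * l * x) (ω₂ i * l * x)
      ≤ ∑ i, μ i * ((ω₁ i * (l * x ^ p) + ω₂ i * (l * x ^ p)) / 2) := by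
        gcongr with i
        · exact hμ0 i
        · refine (lpPowP_le_avg_rpow hp ?_ ?_).trans ?_
          · exact mul_nonneg (mul_nonneg (hω₁0 i) hl) hx
          · exact mul_nonneg (mul_nonneg (hω₂0 i) hl) hx
          · gcongr
            exacts [hterm hω₁0 hω₁l i, hterm hω₂0 hω₂l i]
    _ = l * x ^ p := sum_mul_avg_mul_eq hω₁μ hω₂μ _

end WeightedSums

theorem power_sum_refinement_two_weights_general
    (p : ℝ) (hp : 1 ≤ p)
    {m n : ℕ} (μ : Fin m → ℝ) (lam : Fin n → ℝ)
    (hμ0 : ∀ i, 0 ≤ μ i) (hμ1 : ∑ i, μ i = 1)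
    (hlam0 : ∀ j, 0 ≤ lam j)
    (ω₁ ω₂ : Fin m → Fin n → ℝ)
    (hω₁0 : ∀ i j, 0 ≤ ω₁ i j) (hω₁μ : ∀ j, ∑ i, ω₁ i j * μ i = 1)
    (hω₁lam : ∀ i, ∑ j, ω₁ i j * lam j = 1)
    (hω₂0 : ∀ i j, 0 ≤ ω₂ i j) (hω₂μ : ∀ j, ∑ i, ω₂ i j * μ i = 1)
    (hω₂lam : ∀ i, ∑ j, ω₂ i j * lam j = 1)
    (x : Fin n → ℝ) (hx : ∀ j, 0 ≤ x j) :
    (∑ j, lam j ^ p * x j ^ p) ≤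
        ∑ i, ∑ j, μ i * LpPowP p (ω₁ i j * lam j * x j) (ω₂ i j * lam j * x j) ∧
      (∑ i, ∑ j, μ i * LpPowP p (ω₁ i j * lam j * x j) (ω₂ i j * lam j * x j)) ≤
        ∑ j, lam j * x j ^ p := by
  have hentry {ω : Fin m → Fin n → ℝ} (hω0 : ∀ i j, 0 ≤ ω i j)
      (hωlam : ∀ i, ∑ j, ω i j * lam j = 1) (i : Fin m) (j : Fin n) : ω i j * lam j ≤ 1 :=
    hωlam i ▸ single_le_sum (fun j _ => mul_nonneg (hω0 i j) (hlam0 j)) (mem_univ j)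
  rw [sum_comm]
  constructor
  · gcongr with j
    rw [← Real.mul_rpow (hlam0 j) (hx j)]
    simp_rw [mul_assoc]
    exact rpow_le_sum_mul_lpPowP hp hμ0 hμ1 (hω₁0 · j) (hω₂0 · j) (hω₁μ j) (hω₂μ j)
      (mul_nonneg (hlam0 j) (hx j))
  · gcongr with j
    exact sum_mul_lpPowP_le hp hμ0 (hω₁0 · j) (hω₂0 · j) (hω₁μ j) (hω₂μ j)
      (hentry hω₁0 hω₁lam · j) (hentry hω₂0 hω₂lam · j) (hlam0 j) (hx j)

/-- For nonnegative reals `x₁,…,xₙ` and `p ≥ 1`: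
`∑ⱼλⱼ^p xⱼ^p ≤ ∑ᵢ∑ⱼ μᵢ L_p^p(ω₁(i,j)λⱼxⱼ, ω₂(i,j)λⱼxⱼ) ≤ ∑ⱼλⱼxⱼ^p`. -/
theorem power_sum_refinement_two_weights
    (p : ℝ) (hp : 1 ≤ p)
    {m n : ℕ} (μ : Fin m → ℝ) (lam : Fin n → ℝ)
    (hμ0 : ∀ i, 0 ≤ μ i) (hμ1 : ∑ i, μ i = 1)
    (hlam0 : ∀ j, 0 ≤ lam j) (hlam1 : ∑ j, lam j = 1)
    (ω₁ ω₂ : Fin m → Fin n → ℝ)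
    (hω₁0 : ∀ i j, 0 ≤ ω₁ i j) (hω₁μ : ∀ j, ∑ i, ω₁ i j * μ i = 1)
    (hω₁lam : ∀ i, ∑ j, ω₁ i j * lam j = 1)
    (hω₂0 : ∀ i j, 0 ≤ ω₂ i j) (hω₂μ : ∀ j, ∑ i, ω₂ i j * μ i = 1)
    (hω₂lam : ∀ i, ∑ j, ω₂ i j * lam j = 1)
    (x : Fin n → ℝ) (hx : ∀ j, 0 ≤ x j) :
    (∑ j, lam j ^ p * x j ^ p) ≤
        ∑ i, ∑ j, μ i * LpPowP p (ω₁ i j * lam j * x j) (ω₂ i j * lam j * x j) ∧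
      (∑ i, ∑ j, μ i * LpPowP p (ω₁ i j * lam j * x j) (ω₂ i j * lam j * x j)) ≤
        ∑ j, lam j * x j ^ p :=
  power_sum_refinement_two_weights_general p hp μ lam hμ0 hμ1 hlam0 ω₁ ω₂ hω₁0 hω₁μ hω₁lam hω₂0 hω₂μ
    hω₂lam x hx
end

section
/- Let B = [b_{ij}] and C = [c_{ij}] be two n×n doubly stochastic matrices and p a positive integer. Then n^{2−p} ≤ (1/(p+1)) ∑_{i=1}^n ∑_{j=1}^n ∑_{k=0}^p b_{ij}^k c_{ij}^{p−k} ≤ n. -/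
open Finset

/-- Midpoint power inequality: `2 * ((x+y)/2)^(q+1) ≤ x^(q+1) + y^(q+1)`. -/
private lemma aux_midpoint_pow (x y : ℝ) (hx : 0 ≤ x) (hy : 0 ≤ y) (q : ℕ) :
    2 * ((x + y) / 2) ^ (q + 1) ≤ x ^ (q + 1) + y ^ (q + 1) := by
  have h := pow_sum_div_card_le_sum_pow (s := (univ : Finset (Fin 2)))
    (f := ![x, y]) (by intro i _; fin_cases i <;> simpa) q
  simp [Fin.sum_univ_two] at h
  calc 2 * ((x + y) / 2) ^ (q + 1) = (x + y) ^ (q + 1) / 2 ^ q := by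
        rw [div_pow]; ring
    _ ≤ _ := h

/-- Key lower bound: `(p+1) * ((x+y)/2)^p ≤ ∑_{k=0}^p x^k y^(p-k)`. -/
private lemma aux_sum_pow_lower (x y : ℝ) (hx : 0 ≤ x) (hy : 0 ≤ y) :
    ∀ p : ℕ, ((p : ℝ) + 1) * ((x + y) / 2) ^ p ≤
      ∑ k ∈ Finset.range (p + 1), x ^ k * y ^ (p - k) := by
  intro p
  induction p with
  | zero => simp
  | succ q ih =>
    set m : ℝ := (x + y) / 2 with hm
    have hm0 : 0 ≤ m := by positivity
    set S : ℝ := ∑ k ∈ Finset.range (q + 1), x ^ k * y ^ (q - k) with hS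
    have hS0 : 0 ≤ S := Finset.sum_nonneg fun k _ => by positivity
    have hdec1 : ∑ k ∈ Finset.range (q + 2), x ^ k * y ^ (q + 1 - k)
        = x * S + y ^ (q + 1) := by
      rw [Finset.sum_range_succ' (fun k => x ^ k * y ^ (q + 1 - k)) (q + 1)]
      simp only [pow_zero, one_mul, Nat.succ_sub_succ, pow_succ]
      rw [Finset.mul_sum]
      congr 1
      exact Finset.sum_congr rfl fun k _ => by ring
    have hdec2 : ∑ k ∈ Finset.range (q + 2), x ^ k * y ^ (q + 1 - k)
        = y * S + x ^ (q + 1) := by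
      rw [Finset.sum_range_succ (fun k => x ^ k * y ^ (q + 1 - k)) (q + 1)]
      simp only [Nat.sub_self, pow_zero, mul_one]
      congr 1
      rw [Finset.mul_sum]
      refine Finset.sum_congr rfl fun k hk => ?_
      have hk' : k ≤ q := by simpa [Nat.lt_succ_iff] using hk
      rw [show q + 1 - k = (q - k) + 1 by omega, pow_succ]
      ring
    have htwice : 2 * (∑ k ∈ Finset.range (q + 2), x ^ k * y ^ (q + 1 - k))
        = x ^ (q + 1) + y ^ (q + 1) + (x + y) * S := by
      rw [two_mul]; nth_rewrite 1 [hdec1]; rw [hdec2]; ring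
    have h1 : 2 * m * (((q : ℝ) + 1) * m ^ q) ≤ (x + y) * S := by
      have hxy : x + y = 2 * m := by rw [hm]; ring
      rw [hxy]
      exact mul_le_mul_of_nonneg_left ih (by positivity)
    have h2 := aux_midpoint_pow x y hx hy q
    have : 2 * ((((q : ℝ) + 1) + 1) * m ^ (q + 1)) ≤
        2 * (∑ k ∈ Finset.range (q + 2), x ^ k * y ^ (q + 1 - k)) := by
      rw [htwice]
      have : 2 * ((((q : ℝ) + 1) + 1) * m ^ (q + 1))
          = 2 * m ^ (q + 1) + 2 * m * (((q : ℝ) + 1) * m ^ q) := by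
        rw [pow_succ]; ring
      rw [this]
      exact add_le_add h2 h1
    have final : (((q : ℝ) + 1) + 1) * m ^ (q + 1) ≤
        ∑ k ∈ Finset.range (q + 2), x ^ k * y ^ (q + 1 - k) := by linarith
    push_cast
    simpa [hm] using final

/-- For two `n×n` doubly stochastic matrices `B`, `C` and a positive integer `p`:
`n^{2-p} ≤ (1/(p+1)) ∑ᵢ∑ⱼ∑_{k=0}^p b_{ij}^k c_{ij}^{p-k} ≤ n`. -/
theorem doubly_stochastic_power_sum_bounds
    {n : ℕ} (hn : 0 < n)
    (b c : Fin n → Fin n → ℝ)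
    (hb0 : ∀ i j, 0 ≤ b i j) (hbrow : ∀ i, ∑ j, b i j = 1) (hbcol : ∀ j, ∑ i, b i j = 1)
    (hc0 : ∀ i j, 0 ≤ c i j) (hcrow : ∀ i, ∑ j, c i j = 1) (hccol : ∀ j, ∑ i, c i j = 1)
    (p : ℕ) (hp : 0 < p) :
    (n : ℝ) ^ (2 - (p : ℤ)) ≤
        ((p : ℝ) + 1)⁻¹ * ∑ i, ∑ j, ∑ k ∈ Finset.range (p + 1), b i j ^ k * c i j ^ (p - k) ∧
      ((p : ℝ) + 1)⁻¹ * (∑ i, ∑ j, ∑ k ∈ Finset.range (p + 1), b i j ^ k * c i j ^ (p - k)) ≤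
        (n : ℝ) := by
  have hppos : (0 : ℝ) < (p : ℝ) + 1 := by positivity
  have hb1 : ∀ i j, b i j ≤ 1 := fun i j => by
    have := Finset.single_le_sum (f := fun j' => b i j') (fun j' _ => hb0 i j')
      (Finset.mem_univ j)
    simpa [hbrow i] using this
  have hc1 : ∀ i j, c i j ≤ 1 := fun i j => by
    have := Finset.single_le_sum (f := fun j' => c i j') (fun j' _ => hc0 i j')
      (Finset.mem_univ j)
    simpa [hcrow i] using this
  set T : ℝ := ∑ i, ∑ j, ∑ k ∈ Finset.range (p + 1), b i j ^ k * c i j ^ (p - k) with hT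
  have hsum_b : ∑ i, ∑ j, b i j = (n : ℝ) := by simp [hbrow]
  have hsum_c : ∑ i, ∑ j, c i j = (n : ℝ) := by simp [hcrow]
  constructor
  · -- lower bound
    obtain ⟨q, rfl⟩ : ∃ q, p = q + 1 := ⟨p - 1, by omega⟩
    have hne : (n : ℝ) ≠ 0 := by positivity
    have hJ := pow_sum_div_card_le_sum_pow (s := (Finset.univ : Finset (Fin n × Fin n)))
      (f := fun x => (b x.1 x.2 + c x.1 x.2) / 2)
      (fun x _ => by have := hb0 x.1 x.2; have := hc0 x.1 x.2; positivity) q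
    have hmsum : ∑ x : Fin n × Fin n, (b x.1 x.2 + c x.1 x.2) / 2 = (n : ℝ) := by
      rw [Fintype.sum_prod_type]
      have : ∀ i : Fin n, ∑ j, (b i j + c i j) / 2 = 1 := by
        intro i
        rw [← Finset.sum_div, Finset.sum_add_distrib, hbrow i, hcrow i]
        norm_num
      simp [this]
    have hcard : (#(Finset.univ : Finset (Fin n × Fin n)) : ℝ) = (n : ℝ) * (n : ℝ) := by
      simp [Finset.card_univ]
    rw [hmsum, hcard] at hJ
    have hzpow : (n : ℝ) ^ (2 - ((q + 1 : ℕ) : ℤ)) = (n : ℝ) ^ (q + 1) / ((n : ℝ) * (n : ℝ)) ^ q := by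
      rw [eq_div_iff (by positivity)]
      rw [show (n : ℝ) * (n : ℝ) = (n : ℝ) ^ 2 by ring, ← pow_mul,
        ← zpow_natCast (n : ℝ) (2 * q), ← zpow_natCast (n : ℝ) (q + 1), ← zpow_add₀ hne]
      congr 1
      push_cast
      ring
    have hsum_m : (n : ℝ) ^ (q + 1) / ((n : ℝ) * (n : ℝ)) ^ q
        ≤ ∑ x : Fin n × Fin n, ((b x.1 x.2 + c x.1 x.2) / 2) ^ (q + 1) := hJ
    have hentry : ∀ (x : Fin n × Fin n),
        (((q + 1 : ℕ) : ℝ) + 1) * ((b x.1 x.2 + c x.1 x.2) / 2) ^ (q + 1)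
          ≤ ∑ k ∈ Finset.range ((q + 1) + 1), b x.1 x.2 ^ k * c x.1 x.2 ^ ((q + 1) - k) := by
      intro x
      have := aux_sum_pow_lower (b x.1 x.2) (c x.1 x.2) (hb0 x.1 x.2) (hc0 x.1 x.2) (q + 1)
      push_cast at this ⊢
      exact this
    have hTge : (((q + 1 : ℕ) : ℝ) + 1) *
        (∑ x : Fin n × Fin n, ((b x.1 x.2 + c x.1 x.2) / 2) ^ (q + 1)) ≤ T := by
      have hTprod : T = ∑ x : Fin n × Fin n,
          ∑ k ∈ Finset.range ((q + 1) + 1), b x.1 x.2 ^ k * c x.1 x.2 ^ ((q + 1) - k) := by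
        rw [hT]
        exact (Fintype.sum_prod_type (f := fun x : Fin n × Fin n =>
          ∑ k ∈ Finset.range ((q + 1) + 1), b x.1 x.2 ^ k * c x.1 x.2 ^ ((q + 1) - k))).symm
      rw [hTprod, Finset.mul_sum]
      exact Finset.sum_le_sum fun x _ => hentry x
    rw [hzpow]
    have h1 : (((q + 1 : ℕ) : ℝ) + 1) * ((n : ℝ) ^ (q + 1) / ((n : ℝ) * (n : ℝ)) ^ q)
        ≤ T := le_trans (mul_le_mul_of_nonneg_left hsum_m (by positivity)) hTge
    calc (n : ℝ) ^ (q + 1) / ((n : ℝ) * (n : ℝ)) ^ q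
        = (((q + 1 : ℕ) : ℝ) + 1)⁻¹ * ((((q + 1 : ℕ) : ℝ) + 1) *
            ((n : ℝ) ^ (q + 1) / ((n : ℝ) * (n : ℝ)) ^ q)) := by
          rw [← mul_assoc, inv_mul_cancel₀ (by positivity), one_mul]
      _ ≤ (((q + 1 : ℕ) : ℝ) + 1)⁻¹ * T := by gcongr
  · -- upper bound
    have hub_entry : ∀ i j, ∑ k ∈ Finset.range (p + 1), b i j ^ k * c i j ^ (p - k)
        ≤ c i j + (p : ℝ) * b i j := by
      intro i j
      rw [Finset.sum_range_succ' (fun k => b i j ^ k * c i j ^ (p - k)) p]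
      simp only [pow_zero, one_mul, Nat.sub_zero]
      have h1 : ∑ k ∈ Finset.range p, b i j ^ (k + 1) * c i j ^ (p - (k + 1))
          ≤ (p : ℝ) * b i j := by
        calc ∑ k ∈ Finset.range p, b i j ^ (k + 1) * c i j ^ (p - (k + 1))
            ≤ ∑ _k ∈ Finset.range p, b i j := by
              refine Finset.sum_le_sum fun k _ => ?_
              calc b i j ^ (k + 1) * c i j ^ (p - (k + 1))
                  ≤ b i j * 1 := by
                    refine mul_le_mul ?_ (pow_le_one₀ (hc0 i j) (hc1 i j)) (pow_nonneg (hc0 i j) _) (hb0 i j)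
                    exact pow_le_of_le_one (hb0 i j) (hb1 i j) (by omega)
                _ = b i j := mul_one _
          _ = (p : ℝ) * b i j := by rw [Finset.sum_const, Finset.card_range]; simp
      have h2 : c i j ^ p ≤ c i j := pow_le_of_le_one (hc0 i j) (hc1 i j) hp.ne'
      linarith
    have hTub : T ≤ (n : ℝ) + (p : ℝ) * (n : ℝ) := by
      calc T ≤ ∑ i, ∑ j, (c i j + (p : ℝ) * b i j) := by
            rw [hT]; exact Finset.sum_le_sum fun i _ => Finset.sum_le_sum fun j _ => hub_entry i j
        _ = (n : ℝ) + (p : ℝ) * (n : ℝ) := by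
            simp only [Finset.sum_add_distrib, ← Finset.mul_sum]
            rw [hsum_c, hsum_b]
      
    have hT' : T ≤ ((p : ℝ) + 1) * (n : ℝ) := by nlinarith [hTub]
    calc ((p : ℝ) + 1)⁻¹ * T ≤ ((p : ℝ) + 1)⁻¹ * (((p : ℝ) + 1) * (n : ℝ)) :=
          mul_le_mul_of_nonneg_left hT' (by positivity)
      _ = (n : ℝ) := by rw [← mul_assoc, inv_mul_cancel₀ (by positivity), one_mul]
end

section
/- Let (X,𝒜,ν) be a finite measure space, let C be the set of all nonnegative measurable functions on X, define the concave functional φ : C → ℝ by φ(f) = ∫_X f/(1+f) dν, let μ = (μ₁,…,μ_m) and λ = (λ₁,…,λ_n) be probability vectors, ω₁ and ω₂ two weight functions with respect to μ and λ, and f₁,…,fₙ ∈ C. Then ∑_{j=1}^n λⱼφ(fⱼ) ≤ ν(X) − ∑_{i=1}^m μᵢ ‖L^{-1}(1+∑_{j=1}^n ω₁(i,j)λⱼfⱼ, 1+∑_{j=1}^n ω₂(i,j)λⱼfⱼ)‖_1 ≤ φ(∑_{j=1}^n λⱼfⱼ), where L is the logarithmic mean and L^{-1}(g,h) denotes the function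 x ↦ 1/L(g(x),h(x)). -/
/-!
Since `g / (1 + g) = 1 - (1 + g)⁻¹`, both inequalities follow by integrating the pointwise sandwich
`(1 + ∑ λⱼ aⱼ)⁻¹ ≤ ∑ μᵢ L(Gᵢ, Hᵢ)⁻¹ ≤ ∑ λⱼ (1 + aⱼ)⁻¹`, where `Gᵢ = ∑ ω₁(i,j) λⱼ (1 + aⱼ)` and
`Hᵢ = ∑ ω₂(i,j) λⱼ (1 + aⱼ)`. As `L(a,b)⁻¹` is the mean of `t⁻¹` over `[a, b]`, the
Hermite–Hadamard inequality puts it between `2 / (a + b)` and `(a⁻¹ + b⁻¹) / 2`. Jensen's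
inequality for `t ↦ t⁻¹` then finishes: over `i` with weights `μᵢ` (which average `(Gᵢ + Hᵢ) / 2`
back to `1 + ∑ λⱼ aⱼ`) for the lower bound, and along each row `j ↦ ω(i,j) λⱼ` followed by the
column condition for the upper bound.
-/

open Finset MeasureTheory

noncomputable def logMean (a b : ℝ) : ℝ :=
  if a = b then a else (b - a) / (Real.log b - Real.log a)

open Real

lemma two_mul_sub_div_add_le_log_sub_log {a b : ℝ} (ha : 0 < a) (hab : a ≤ b) :
    2 * (b - a) / (a + b) ≤ log b - log a := by
  have hb : 0 < b := ha.trans_le hab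
  have hs : 0 < a + b := by linarith
  have hx1 : |(b - a) / (a + b)| < 1 := by
    rw [abs_of_nonneg (div_nonneg (by linarith) hs.le), div_lt_one hs]; linarith
  have hp : 1 + (b - a) / (a + b) = 2 * b / (a + b) := by field_simp; ring
  have hm : 1 - (b - a) / (a + b) = 2 * a / (a + b) := by field_simp; ring
  calc 2 * (b - a) / (a + b)
      = 2 * (1 / (2 * ((0 : ℕ) : ℝ) + 1)) * ((b - a) / (a + b)) ^ (2 * 0 + 1) := by
        norm_num; ring
    _ ≤ log (1 + (b - a) / (a + b)) - log (1 - (b - a) / (a + b)) :=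
        le_hasSum (hasSum_log_sub_log_of_abs_lt_one hx1) 0 fun k _ => by positivity
    _ = log b - log a := by
        rw [hp, hm, ← log_div (by positivity) (by positivity), ← log_div hb.ne' ha.ne']
        congr 1
        field_simp

lemma log_sub_log_le {a b : ℝ} (ha : 0 < a) (hab : a ≤ b) :
    log b - log a ≤ (b / a - a / b) / 2 := by
  have hb : 0 < b := ha.trans_le hab
  rw [← log_div hb.ne' ha.ne']
  calc log (b / a) ≤ sinh (log (b / a)) := self_le_sinh_iff.2 (log_nonneg ((one_le_div ha).2 hab))
    _ = (b / a - a / b) / 2 := by rw [sinh_log (by positivity), inv_div]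

lemma logMean_comm (a b : ℝ) : logMean a b = logMean b a := by
  unfold logMean
  rcases eq_or_ne a b with rfl | h
  · rfl
  · rw [if_neg h, if_neg h.symm, ← neg_sub b a, ← neg_sub (log b), neg_div_neg_eq]

lemma inv_logMean_of_lt {a b : ℝ} (hab : a < b) :
    (logMean a b)⁻¹ = (log b - log a) / (b - a) := by
  rw [logMean, if_neg hab.ne, inv_div]

lemma two_div_add_le_inv_logMean {a b : ℝ} (ha : 0 < a) (hb : 0 < b) :
    2 / (a + b) ≤ (logMean a b)⁻¹ := by
  wlog hab : a < b generalizing a b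
  · rcases (not_lt.1 hab).eq_or_lt with rfl | hba
    · rw [logMean, if_pos rfl, ← two_mul, div_mul_cancel_left₀ two_ne_zero]
    · simpa only [logMean_comm, add_comm] using this hb ha hba
  rw [inv_logMean_of_lt hab, le_div_iff₀ (sub_pos.2 hab), div_mul_eq_mul_div]
  exact two_mul_sub_div_add_le_log_sub_log ha hab.le

lemma inv_logMean_pos {a b : ℝ} (ha : 0 < a) (hb : 0 < b) : 0 < (logMean a b)⁻¹ :=
  (div_pos two_pos (add_pos ha hb)).trans_le (two_div_add_le_inv_logMean ha hb)

lemma inv_logMean_le {a b : ℝ} (ha : 0 < a) (hb : 0 < b) :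
    (logMean a b)⁻¹ ≤ (a⁻¹ + b⁻¹) / 2 := by
  wlog hab : a < b generalizing a b
  · rcases (not_lt.1 hab).eq_or_lt with rfl | hba
    · rw [logMean, if_pos rfl, add_self_div_two]
    · simpa only [logMean_comm, add_comm] using this hb ha hba
  rw [inv_logMean_of_lt hab, div_le_iff₀ (sub_pos.2 hab)]
  calc log b - log a ≤ (b / a - a / b) / 2 := log_sub_log_le ha hab.le
    _ = (a⁻¹ + b⁻¹) / 2 * (b - a) := by field_simp; ring

lemma measurable_logMean : Measurable fun p : ℝ × ℝ => logMean p.1 p.2 :=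
  Measurable.ite (measurableSet_eq_fun measurable_fst measurable_snd) measurable_fst (by fun_prop)

@[fun_prop]
lemma Measurable.logMean {α : Type*} [MeasurableSpace α] {f g : α → ℝ} (hf : Measurable f)
    (hg : Measurable g) : Measurable fun x => logMean (f x) (g x) :=
  measurable_logMean.comp (hf.prodMk hg)

lemma inv_sum_le_sum_inv {ι : Type*} {s : Finset ι} {w y : ι → ℝ} (hw : ∀ i ∈ s, 0 ≤ w i)
    (hw1 : ∑ i ∈ s, w i = 1) (hy : ∀ i ∈ s, 0 < y i) :
    (∑ i ∈ s, w i * y i)⁻¹ ≤ ∑ i ∈ s, w i * (y i)⁻¹ := by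
  simpa [zpow_neg_one, smul_eq_mul] using (convexOn_zpow (-1)).map_sum_le hw hw1 hy

lemma sum_mul_pos {ι : Type*} {s : Finset ι} {w y : ι → ℝ} (hw : ∀ i ∈ s, 0 ≤ w i)
    (hw1 : ∑ i ∈ s, w i = 1) (hy : ∀ i ∈ s, 0 < y i) : 0 < ∑ i ∈ s, w i * y i :=
  (convex_Ioi (0 : ℝ)).sum_mem hw hw1 hy

lemma one_add_sum_mul_eq_sum_mul_one_add {κ : Type*} [Fintype κ] {lam : κ → ℝ}
    (hlam1 : ∑ j, lam j = 1) (a : κ → ℝ) : 1 + ∑ j, lam j * a j = ∑ j, lam j * (1 + a j) := by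
  simp_rw [mul_add, mul_one, sum_add_distrib, hlam1]

structure IsWeightFunction {ι κ : Type*} [Fintype ι] [Fintype κ] (μ : ι → ℝ) (lam : κ → ℝ)
    (ω : ι → κ → ℝ) : Prop where
  nonneg : ∀ i j, 0 ≤ ω i j
  col_sum : ∀ j, ∑ i, ω i j * μ i = 1
  row_sum : ∀ i, ∑ j, ω i j * lam j = 1

namespace IsWeightFunction

variable {ι κ : Type*} [Fintype ι] [Fintype κ] {μ : ι → ℝ} {lam : κ → ℝ} {ω : ι → κ → ℝ}

lemma sum_mul_sum (hω : IsWeightFunction μ lam ω) (c : κ → ℝ) :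
    ∑ i, μ i * ∑ j, ω i j * lam j * c j = ∑ j, lam j * c j := by
  simp_rw [mul_sum]
  rw [sum_comm]
  refine sum_congr rfl fun j _ => ?_
  simp_rw [← mul_assoc, mul_comm (μ _) (ω _ j)]
  rw [← sum_mul, ← sum_mul, hω.col_sum, one_mul]

lemma one_le_one_add_sum (hω : IsWeightFunction μ lam ω) (hlam : ∀ j, 0 ≤ lam j) {a : κ → ℝ}
    (ha : ∀ j, 0 ≤ a j) (i : ι) : 1 ≤ 1 + ∑ j, ω i j * lam j * a j :=
  le_add_of_nonneg_right <| sum_nonneg fun j _ =>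
    mul_nonneg (mul_nonneg (hω.nonneg i j) (hlam j)) (ha j)

lemma sum_pos (hω : IsWeightFunction μ lam ω) (hlam : ∀ j, 0 ≤ lam j) {y : κ → ℝ}
    (hy : ∀ j, 0 < y j) (i : ι) : 0 < ∑ j, ω i j * lam j * y j :=
  sum_mul_pos (fun j _ => mul_nonneg (hω.nonneg i j) (hlam j)) (hω.row_sum i) fun j _ => hy j

lemma inv_sum_le (hω : IsWeightFunction μ lam ω) (hlam : ∀ j, 0 ≤ lam j) {y : κ → ℝ}
    (hy : ∀ j, 0 < y j) (i : ι) :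
    (∑ j, ω i j * lam j * y j)⁻¹ ≤ ∑ j, ω i j * lam j * (y j)⁻¹ :=
  inv_sum_le_sum_inv (fun j _ => mul_nonneg (hω.nonneg i j) (hlam j)) (hω.row_sum i)
    fun j _ => hy j

end IsWeightFunction

section logMeanRefinement

variable {ι κ : Type*} [Fintype ι] [Fintype κ] {μ : ι → ℝ} {lam : κ → ℝ} {ω₁ ω₂ : ι → κ → ℝ}
  {y : κ → ℝ}

lemma inv_sum_le_sum_inv_logMean (hμ : ∀ i, 0 ≤ μ i) (hμ1 : ∑ i, μ i = 1)
    (hlam : ∀ j, 0 ≤ lam j) (hω₁ : IsWeightFunction μ lam ω₁) (hω₂ : IsWeightFunction μ lam ω₂)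
    (hy : ∀ j, 0 < y j) :
    (∑ j, lam j * y j)⁻¹ ≤
      ∑ i, μ i * (logMean (∑ j, ω₁ i j * lam j * y j) (∑ j, ω₂ i j * lam j * y j))⁻¹ := by
  set G := fun i => ∑ j, ω₁ i j * lam j * y j
  set H := fun i => ∑ j, ω₂ i j * lam j * y j
  have hG := hω₁.sum_pos hlam hy
  have hH := hω₂.sum_pos hlam hy
  have hmean : ∑ i, μ i * ((G i + H i) / 2) = ∑ j, lam j * y j := by
    simp_rw [mul_div_assoc', mul_add, ← sum_div, sum_add_distrib, G, H, hω₁.sum_mul_sum,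
      hω₂.sum_mul_sum, add_self_div_two]
  calc (∑ j, lam j * y j)⁻¹ = (∑ i, μ i * ((G i + H i) / 2))⁻¹ := by rw [hmean]
    _ ≤ ∑ i, μ i * ((G i + H i) / 2)⁻¹ :=
        inv_sum_le_sum_inv (fun i _ => hμ i) hμ1 fun i _ => by linarith [hG i, hH i]
    _ ≤ ∑ i, μ i * (logMean (G i) (H i))⁻¹ := by
        gcongr ∑ i, _ * ?_ with i
        · exact hμ i
        · rw [inv_div]; exact two_div_add_le_inv_logMean (hG i) (hH i)

lemma sum_inv_logMean_le_sum_inv (hμ : ∀ i, 0 ≤ μ i) (hlam : ∀ j, 0 ≤ lam j)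
    (hω₁ : IsWeightFunction μ lam ω₁) (hω₂ : IsWeightFunction μ lam ω₂) (hy : ∀ j, 0 < y j) :
    ∑ i, μ i * (logMean (∑ j, ω₁ i j * lam j * y j) (∑ j, ω₂ i j * lam j * y j))⁻¹ ≤
      ∑ j, lam j * (y j)⁻¹ := by
  calc ∑ i, μ i * (logMean (∑ j, ω₁ i j * lam j * y j) (∑ j, ω₂ i j * lam j * y j))⁻¹
      ≤ ∑ i, μ i * (((∑ j, ω₁ i j * lam j * y j)⁻¹ + (∑ j, ω₂ i j * lam j * y j)⁻¹) / 2) := by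
        gcongr ∑ i, _ * ?_ with i
        · exact hμ i
        · exact inv_logMean_le (hω₁.sum_pos hlam hy i) (hω₂.sum_pos hlam hy i)
    _ ≤ ∑ i, μ i * ((∑ j, ω₁ i j * lam j * (y j)⁻¹ + ∑ j, ω₂ i j * lam j * (y j)⁻¹) / 2) := by
        gcongr with i
        · exact hμ i
        · exact hω₁.inv_sum_le hlam hy i
        · exact hω₂.inv_sum_le hlam hy i
    _ = ∑ j, lam j * (y j)⁻¹ := by
        simp_rw [mul_div_assoc', mul_add, ← sum_div, sum_add_distrib, hω₁.sum_mul_sum,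
          hω₂.sum_mul_sum, add_self_div_two]

end logMeanRefinement

section concaveFunctional

variable {X : Type*} [MeasurableSpace X] (ν : Measure X) [IsFiniteMeasure ν] {g : X → ℝ}

lemma integrable_inv_one_add (hg : Measurable g) (hg0 : ∀ x, 0 ≤ g x) :
    Integrable (fun x => (1 + g x)⁻¹) ν :=
  .of_bound (measurable_const.add hg).inv.aestronglyMeasurable 1 <| .of_forall fun x => by
    have := hg0 x
    rw [norm_inv, Real.norm_of_nonneg (by linarith)]
    exact inv_le_one_of_one_le₀ (by linarith)

lemma integral_div_one_add (hg : Measurable g) (hg0 : ∀ x, 0 ≤ g x) :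
    ∫ x, g x / (1 + g x) ∂ν = ν.real Set.univ - ∫ x, (1 + g x)⁻¹ ∂ν := by
  have h : ∀ x, g x / (1 + g x) = 1 - (1 + g x)⁻¹ := fun x => by
    have := hg0 x
    field_simp
    ring
  simp_rw [h]
  rw [integral_sub (integrable_const 1) (integrable_inv_one_add ν hg hg0), integral_const,
    smul_eq_mul, mul_one]

lemma integrable_inv_logMean {a b : X → ℝ} (ha : Measurable a) (hb : Measurable b)
    (ha1 : ∀ x, 1 ≤ a x) (hb1 : ∀ x, 1 ≤ b x) :
    Integrable (fun x => (logMean (a x) (b x))⁻¹) ν :=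
  .of_bound (ha.logMean hb).inv.aestronglyMeasurable 1 <| .of_forall fun x => by
    have ha0 : 0 < a x := by linarith [ha1 x]
    have hb0 : 0 < b x := by linarith [hb1 x]
    rw [Real.norm_of_nonneg (inv_logMean_pos ha0 hb0).le]
    linarith [inv_logMean_le ha0 hb0, inv_le_one_of_one_le₀ (ha1 x), inv_le_one_of_one_le₀ (hb1 x)]

lemma integral_sandwich_of_inv_one_add_sandwich {ι κ : Type*} [Fintype ι] [Fintype κ] {μ : ι → ℝ}
    {lam : κ → ℝ} (hlam0 : ∀ j, 0 ≤ lam j) (hlam1 : ∑ j, lam j = 1)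
    {f : κ → X → ℝ} (hfm : ∀ j, Measurable (f j)) (hf0 : ∀ j x, 0 ≤ f j x)
    {ℓ : ι → X → ℝ} (hℓ : ∀ i, Integrable (ℓ i) ν)
    (hlower : ∀ x, (1 + ∑ j, lam j * f j x)⁻¹ ≤ ∑ i, μ i * ℓ i x)
    (hupper : ∀ x, ∑ i, μ i * ℓ i x ≤ ∑ j, lam j * (1 + f j x)⁻¹) :
    ∑ j, lam j * ∫ x, f j x / (1 + f j x) ∂ν ≤ ν.real Set.univ - ∑ i, μ i * ∫ x, ℓ i x ∂ν ∧
      ν.real Set.univ - ∑ i, μ i * ∫ x, ℓ i x ∂ν ≤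
        ∫ x, (∑ j, lam j * f j x) / (1 + ∑ j, lam j * f j x) ∂ν := by
  have hfint : ∀ j, Integrable (fun x => (1 + f j x)⁻¹) ν := fun j =>
    integrable_inv_one_add ν (hfm j) (hf0 j)
  have hS0 : ∀ x, 0 ≤ ∑ j, lam j * f j x := fun x =>
    sum_nonneg fun j _ => mul_nonneg (hlam0 j) (hf0 j x)
  have hℓsum : Integrable (fun x => ∑ i, μ i * ℓ i x) ν :=
    integrable_finsetSum _ fun i _ => (hℓ i).const_mul _
  have hφf : ∑ j, lam j * ∫ x, f j x / (1 + f j x) ∂ν =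
      ν.real Set.univ - ∫ x, ∑ j, lam j * (1 + f j x)⁻¹ ∂ν := by
    simp_rw [integral_div_one_add ν (hfm _) (hf0 _)]
    rw [integral_finsetSum _ fun j _ => (hfint j).const_mul _]
    simp_rw [integral_const_mul, mul_sub, sum_sub_distrib, ← sum_mul, hlam1, one_mul]
  have hℓμ : ∑ i, μ i * ∫ x, ℓ i x ∂ν = ∫ x, ∑ i, μ i * ℓ i x ∂ν := by
    rw [integral_finsetSum _ fun i _ => (hℓ i).const_mul _]
    simp_rw [integral_const_mul]
  rw [hφf, hℓμ, integral_div_one_add ν (by fun_prop) hS0]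
  exact ⟨sub_le_sub_left (integral_mono hℓsum
      (integrable_finsetSum _ fun j _ => (hfint j).const_mul _) hupper) _,
    sub_le_sub_left (integral_mono (integrable_inv_one_add ν (by fun_prop) hS0) hℓsum hlower) _⟩

end concaveFunctional

/-- Refinement of Jensen's inequality for the concave functional
`φ(f) = ∫ f/(1+f) dν` on nonnegative measurable functions on a finite measure space,
via two weight functions and the logarithmic mean. -/
theorem concave_functional_refinement_logMean
    {X : Type*} [MeasurableSpace X] (ν : Measure X) [IsFiniteMeasure ν]
    {m n : ℕ} (μ : Fin m → ℝ) (lam : Fin n → ℝ)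
    (hμ0 : ∀ i, 0 ≤ μ i) (hμ1 : ∑ i, μ i = 1)
    (hlam0 : ∀ j, 0 ≤ lam j) (hlam1 : ∑ j, lam j = 1)
    (ω₁ ω₂ : Fin m → Fin n → ℝ)
    (hω₁0 : ∀ i j, 0 ≤ ω₁ i j) (hω₁μ : ∀ j, ∑ i, ω₁ i j * μ i = 1)
    (hω₁lam : ∀ i, ∑ j, ω₁ i j * lam j = 1)
    (hω₂0 : ∀ i j, 0 ≤ ω₂ i j) (hω₂μ : ∀ j, ∑ i, ω₂ i j * μ i = 1)
    (hω₂lam : ∀ i, ∑ j, ω₂ i j * lam j = 1)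
    (f : Fin n → X → ℝ) (hfm : ∀ j, Measurable (f j)) (hf0 : ∀ j x, 0 ≤ f j x) :
    (∑ j, lam j * ∫ x, f j x / (1 + f j x) ∂ν) ≤
        (ν Set.univ).toReal -
          ∑ i, μ i *
            ∫ x, |(logMean (1 + ∑ j, ω₁ i j * lam j * f j x)
                (1 + ∑ j, ω₂ i j * lam j * f j x))⁻¹| ∂ν ∧
      ((ν Set.univ).toReal -
          ∑ i, μ i *
            ∫ x, |(logMean (1 + ∑ j, ω₁ i j * lam j * f j x)
                (1 + ∑ j, ω₂ i j * lam j * f j x))⁻¹| ∂ν) ≤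
        ∫ x, (∑ j, lam j * f j x) / (1 + ∑ j, lam j * f j x) ∂ν := by
  have hω₁ : IsWeightFunction μ lam ω₁ := ⟨hω₁0, hω₁μ, hω₁lam⟩
  have hω₂ : IsWeightFunction μ lam ω₂ := ⟨hω₂0, hω₂μ, hω₂lam⟩
  have hy : ∀ x j, 0 < 1 + f j x := fun x j => by linarith [hf0 j x]
  have hℓ : ∀ i x, |(logMean (1 + ∑ j, ω₁ i j * lam j * f j x)
      (1 + ∑ j, ω₂ i j * lam j * f j x))⁻¹| = (logMean (∑ j, ω₁ i j * lam j * (1 + f j x))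
      (∑ j, ω₂ i j * lam j * (1 + f j x)))⁻¹ := fun i x => by
    rw [one_add_sum_mul_eq_sum_mul_one_add (hω₁.row_sum i),
      one_add_sum_mul_eq_sum_mul_one_add (hω₂.row_sum i)]
    exact abs_of_pos (inv_logMean_pos (hω₁.sum_pos hlam0 (hy x) i) (hω₂.sum_pos hlam0 (hy x) i))
  refine integral_sandwich_of_inv_one_add_sandwich ν hlam0 hlam1 hfm hf0 (fun i =>
    (integrable_inv_logMean ν (by fun_prop) (by fun_prop)
      (fun x => hω₁.one_le_one_add_sum hlam0 (hf0 · x) i)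
      (fun x => hω₂.one_le_one_add_sum hlam0 (hf0 · x) i)).abs) (fun x => ?_) (fun x => ?_)
  · rw [one_add_sum_mul_eq_sum_mul_one_add hlam1]
    simp_rw [hℓ]
    exact inv_sum_le_sum_inv_logMean hμ0 hμ1 hlam0 hω₁ hω₂ (hy x)
  · simp_rw [hℓ]
    exact sum_inv_logMean_le_sum_inv hμ0 hlam0 hω₁ hω₂ (hy x)
end
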